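/- For any measurable estimator of the mean θ̂ : ℝⁿ → ℝ, any variance value v > 0, and any deviation level η > 0, there exists a mean m ∈ ℝ such that, if (Y_i)_{i=1}^n is an i.i.d. sample drawn from the Gaussian distribution N(m, v), then P(θ̂(Y₁,…,Y_n) ≥ m + η) ≥ P(M ≥ m + η) or P(θ̂(Y₁,…,Y_n) ≤ m − η) ≥ P(M ≤ m − η), where M = (1/n) Σ_{i=1}^n Y_i is the empirical mean. -/

import Mathlib

/-!
If the claim failed for both `m = -η` and `m = η`, then the test "reject `N(-η, v)` when
`θ̂ ≥ 0`" would have a strictly smaller sum of type I and type II error probabilities than the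
test "reject when `M ≥ 0`". But the likelihood ratio of `N(η, v)^⊗n` against `N(-η, v)^⊗n` is
an increasing function of `∑ yᵢ`, so (Neyman–Pearson) the test `M ≥ 0` minimises this sum; the
boundary `{M = 0}`, counted by both of its error events, is a null hyperplane.
-/

open MeasureTheory ProbabilityTheory
open scoped ENNReal NNReal

theorem MeasureTheory.Measure.add_apply_compl_le_of_restrict_le {α : Type*}
    [MeasurableSpace α] {μ ν : Measure α} {B C : Set α} (hB : MeasurableSet B)
    (hC : MeasurableSet C) (hμν : μ.restrict C ≤ ν.restrict C)
    (hνμ : ν.restrict Cᶜ ≤ μ.restrict Cᶜ) :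
    μ C + ν Cᶜ ≤ μ B + ν Bᶜ := by
  have hCB : μ (C \ B) ≤ ν (C \ B) := by
    simpa only [Measure.restrict_eq_self _ Set.sdiff_subset] using
      Measure.le_iff'.1 hμν (C \ B)
  have hCcB : ν (Cᶜ ∩ B) ≤ μ (Cᶜ ∩ B) := by
    simpa only [Measure.restrict_eq_self _ Set.inter_subset_left] using
      Measure.le_iff'.1 hνμ (Cᶜ ∩ B)
  calc μ C + ν Cᶜ = μ (C ∩ B) + μ (C \ B) + (ν (Cᶜ ∩ B) + ν (Cᶜ \ B)) := by
        rw [measure_inter_add_sdiff _ hB, measure_inter_add_sdiff _ hB]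
    _ ≤ μ (C ∩ B) + ν (C \ B) + (μ (Cᶜ ∩ B) + ν (Cᶜ \ B)) := by gcongr
    _ = μ (B ∩ C) + μ (B \ C) + (ν (Bᶜ ∩ C) + ν (Bᶜ \ C)) := by
        rw [Set.inter_comm C B, Set.sdiff_eq C B, Set.inter_comm C Bᶜ, Set.inter_comm Cᶜ B,
          ← Set.sdiff_eq, Set.sdiff_eq Cᶜ B, Set.inter_comm Cᶜ Bᶜ, ← Set.sdiff_eq]
        ring
    _ = μ B + ν Bᶜ := by rw [measure_inter_add_sdiff _ hC, measure_inter_add_sdiff _ hC]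

theorem MeasureTheory.lintegral_fin_prod_eq_prod {n : ℕ} {E : Type*}
    [MeasurableSpace E] (μ : Fin n → Measure E) [∀ i, SigmaFinite (μ i)]
    {f : Fin n → E → ℝ≥0∞} (hf : ∀ i, Measurable (f i)) :
    ∫⁻ x, ∏ i, f i (x i) ∂Measure.pi μ = ∏ i, ∫⁻ t, f i t ∂μ i := by
  induction n with
  | zero => simp
  | succ n ih =>
    calc _ = ∫⁻ p : E × (Fin n → E), f 0 p.1 * ∏ j, f j.succ (p.2 j)
          ∂(μ 0).prod (Measure.pi fun j => μ j.succ) := by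
          rw [← (measurePreserving_piFinSuccAbove μ 0).symm.lintegral_comp_emb
            (MeasurableEquiv.measurableEmbedding _)]
          simp_rw [MeasurableEquiv.piFinSuccAbove_symm_apply, Fin.insertNthEquiv,
            Fin.prod_univ_succ, Fin.insertNth_zero, Equiv.coe_fn_mk, Fin.cons_succ,
            Fin.zero_succAbove, cast_eq, Fin.cons_zero]
      _ = (∫⁻ t, f 0 t ∂μ 0) * ∏ j : Fin n, ∫⁻ t, f j.succ t ∂μ j.succ := by
          rw [lintegral_prod_mul (f := f 0) (g := fun y : Fin n → E => ∏ j, f j.succ (y j))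
            (hf 0).aemeasurable (Finset.measurable_prod _ fun j _ =>
              (hf j.succ).comp (measurable_pi_apply j)).aemeasurable,
            ih _ fun j => hf j.succ]
      _ = _ := (Fin.prod_univ_succ fun i => ∫⁻ t, f i t ∂μ i).symm

theorem MeasureTheory.lintegral_fintype_prod_eq_prod {ι E : Type*} [Fintype ι]
    [MeasurableSpace E] (μ : ι → Measure E) [∀ i, SigmaFinite (μ i)]
    {f : ι → E → ℝ≥0∞} (hf : ∀ i, Measurable (f i)) :
    ∫⁻ x, ∏ i, f i (x i) ∂Measure.pi μ = ∏ i, ∫⁻ t, f i t ∂μ i := by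
  let e := (Fintype.equivFin ι).symm
  rw [← (measurePreserving_piCongrLeft μ e).lintegral_comp_emb
    (MeasurableEquiv.measurableEmbedding _)]
  simp_rw [← e.prod_comp, MeasurableEquiv.coe_piCongrLeft, Equiv.piCongrLeft_apply_apply]
  exact lintegral_fin_prod_eq_prod _ fun i => hf (e i)

theorem MeasureTheory.Measure.pi_withDensity {ι E : Type*} [Fintype ι] [MeasurableSpace E]
    (μ : ι → Measure E) [∀ i, SigmaFinite (μ i)] {f : ι → E → ℝ≥0∞} (hf : ∀ i, Measurable (f i))
    [∀ i, SigmaFinite ((μ i).withDensity (f i))] :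
    Measure.pi (fun i => (μ i).withDensity (f i)) =
      (Measure.pi μ).withDensity fun x => ∏ i, f i (x i) := by
  refine Measure.pi_eq fun s hs => ?_
  rw [withDensity_apply _ (.univ_pi hs), Measure.restrict_pi_pi,
    lintegral_fintype_prod_eq_prod _ hf]
  exact Finset.prod_congr rfl fun i _ => (withDensity_apply _ (hs i)).symm

theorem MeasureTheory.Measure.pi_setOf_sum_eq_eq_zero {n : ℕ} (μ : Fin (n + 1) → Measure ℝ)
    [∀ i, SigmaFinite (μ i)] [NullSingletonClass (μ 0)] (c : ℝ) :
    Measure.pi μ {x | ∑ i, x i = c} = 0 := by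
  have hS : MeasurableSet {p : ℝ × (Fin n → ℝ) | p.1 + ∑ j, p.2 j = c} :=
    measurableSet_eq_fun (by fun_prop) measurable_const
  have hpre : {x : Fin (n + 1) → ℝ | ∑ i, x i = c} =
      MeasurableEquiv.piFinSuccAbove (fun _ => ℝ) 0 ⁻¹'
        {p : ℝ × (Fin n → ℝ) | p.1 + ∑ j, p.2 j = c} := by
    ext x
    simp [MeasurableEquiv.piFinSuccAbove_apply, Fin.sum_univ_succ, Fin.tail]
  rw [hpre, (measurePreserving_piFinSuccAbove μ 0).measure_preimage hS.nullMeasurableSet,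
    Measure.prod_apply_symm hS]
  have hslice : ∀ y : Fin n → ℝ, {a : ℝ | a + ∑ j, y j = c} = {c - ∑ j, y j} := by
    intro y; ext a; simp [eq_sub_iff_add_eq]
  simp [hslice]

theorem Finset.sum_sub_sq_sub_sum_sub_sq {ι : Type*} [Fintype ι] (x : ι → ℝ) (a b : ℝ) :
    ∑ i, (x i - a) ^ 2 - ∑ i, (x i - b) ^ 2 =
      (b - a) * (2 * ∑ i, x i - Fintype.card ι * (a + b)) := by
  simp only [sub_sq, Finset.sum_add_distrib, Finset.sum_sub_distrib, ← Finset.mul_sum,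
    ← Finset.sum_mul, Finset.sum_const, Finset.card_univ, nsmul_eq_mul]
  ring

theorem ProbabilityTheory.pi_gaussianReal_eq_withDensity {ι : Type*} [Fintype ι] (m : ℝ)
    {v : ℝ≥0} (hv : v ≠ 0) :
    Measure.pi (fun _ : ι => gaussianReal m v) =
      volume.withDensity fun x => ∏ i, gaussianPDF m v (x i) := by
  have : SigmaFinite (volume.withDensity (gaussianPDF m v)) := by
    rw [← gaussianReal_of_var_ne_zero m hv]; infer_instance
  simp_rw [gaussianReal_of_var_ne_zero m hv]
  exact Measure.pi_withDensity _ fun _ => measurable_gaussianPDF m v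

theorem ProbabilityTheory.prod_gaussianPDF_le_of_sum_sq_le {ι : Type*} [Fintype ι]
    {v : ℝ≥0} {m₁ m₂ : ℝ} {x : ι → ℝ} (h : ∑ i, (x i - m₂) ^ 2 ≤ ∑ i, (x i - m₁) ^ 2) :
    ∏ i, gaussianPDF m₁ v (x i) ≤ ∏ i, gaussianPDF m₂ v (x i) := by
  simp only [gaussianPDF_def]
  rw [← ENNReal.ofReal_prod_of_nonneg fun i _ => gaussianPDFReal_nonneg m₁ v (x i),
    ← ENNReal.ofReal_prod_of_nonneg fun i _ => gaussianPDFReal_nonneg m₂ v (x i)]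
  refine ENNReal.ofReal_le_ofReal ?_
  simp only [gaussianPDFReal, Finset.prod_mul_distrib, ← Real.exp_sum, ← Finset.sum_div,
    Finset.sum_neg_distrib]
  gcongr

theorem ProbabilityTheory.restrict_pi_gaussianReal_le_of_sum_sq_le {ι : Type*} [Fintype ι]
    {v : ℝ≥0} (hv : v ≠ 0) {m₁ m₂ : ℝ} {C : Set (ι → ℝ)} (hC : MeasurableSet C)
    (h : ∀ x ∈ C, ∑ i, (x i - m₂) ^ 2 ≤ ∑ i, (x i - m₁) ^ 2) :
    (Measure.pi fun _ : ι => gaussianReal m₁ v).restrict C ≤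
      (Measure.pi fun _ : ι => gaussianReal m₂ v).restrict C := by
  rw [pi_gaussianReal_eq_withDensity _ hv, pi_gaussianReal_eq_withDensity _ hv,
    restrict_withDensity hC, restrict_withDensity hC]
  exact withDensity_mono <| (ae_restrict_iff' hC).2 <| ae_of_all _ fun x hx =>
    prod_gaussianPDF_le_of_sum_sq_le (h x hx)

theorem ProbabilityTheory.pi_gaussianReal_mean_test_le {n : ℕ} (hn : 0 < n) {v : ℝ≥0}
    (hv : v ≠ 0) {m₁ m₂ : ℝ} (hm : m₁ ≤ m₂) {B : Set (Fin n → ℝ)} (hB : MeasurableSet B) :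
    (Measure.pi fun _ : Fin n => gaussianReal m₁ v)
          {y | (m₁ + m₂) / 2 ≤ (1 / n) * ∑ i, y i} +
        (Measure.pi fun _ : Fin n => gaussianReal m₂ v)
          {y | (1 / n) * ∑ i, y i ≤ (m₁ + m₂) / 2} ≤
      (Measure.pi fun _ : Fin n => gaussianReal m₁ v) B +
        (Measure.pi fun _ : Fin n => gaussianReal m₂ v) Bᶜ := by
  set P₁ := Measure.pi fun _ : Fin n => gaussianReal m₁ v
  set P₂ := Measure.pi fun _ : Fin n => gaussianReal m₂ v
  set c := (m₁ + m₂) / 2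
  set C := {y : Fin n → ℝ | c ≤ (1 / n) * ∑ i, y i}
  have hC : MeasurableSet C := measurableSet_le measurable_const (by fun_prop)
  have hgap : ∀ y : Fin n → ℝ, ∑ i, (y i - m₁) ^ 2 - ∑ i, (y i - m₂) ^ 2 =
      2 * n * (m₂ - m₁) * ((1 / n) * ∑ i, y i - c) := by
    intro y
    rw [Finset.sum_sub_sq_sub_sum_sub_sq, Fintype.card_fin]
    field_simp
    ring
  have hboundary : P₂ {y | (1 / n) * ∑ i, y i ≤ c} ≤ P₂ Cᶜ := by
    obtain ⟨k, rfl⟩ := Nat.exists_eq_add_one_of_ne_zero hn.ne'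
    have := nullSingletonClass_gaussianReal (μ := m₂) hv
    calc P₂ {y | (1 / (k + 1 : ℕ)) * ∑ i, y i ≤ c}
        ≤ P₂ (Cᶜ ∪ {y | ∑ i, y i = (k + 1 : ℕ) * c}) := by
          refine measure_mono fun y (hy : _ ≤ c) => ?_
          rcases hy.lt_or_eq with hlt | heq
          · exact Or.inl (not_le.2 hlt)
          · right
            change ∑ i, y i = _
            rw [← heq]
            field_simp
      _ ≤ P₂ Cᶜ + 0 := (measure_union_le _ _).trans_eq
          (by rw [Measure.pi_setOf_sum_eq_eq_zero])
      _ = P₂ Cᶜ := add_zero _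
  have hspread : (0 : ℝ) ≤ 2 * n * (m₂ - m₁) := mul_nonneg (by positivity) (sub_nonneg.2 hm)
  calc P₁ C + P₂ {y | (1 / n) * ∑ i, y i ≤ c} ≤ P₁ C + P₂ Cᶜ := by gcongr
    _ ≤ P₁ B + P₂ Bᶜ := by
      refine Measure.add_apply_compl_le_of_restrict_le hB hC
        (restrict_pi_gaussianReal_le_of_sum_sq_le hv hC fun y hy => ?_)
        (restrict_pi_gaussianReal_le_of_sum_sq_le hv hC.compl fun y hy => ?_)
      · linarith [hgap y, mul_nonneg hspread (sub_nonneg.2 (show c ≤ _ from hy))]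
      · linarith [hgap y, mul_nonpos_of_nonneg_of_nonpos hspread
          (sub_nonpos.2 (not_le.1 (show ¬ c ≤ _ from hy)).le)]

theorem gaussian_empirical_mean_minimax
    (n : ℕ) (hn : 0 < n)
    (est : (Fin n → ℝ) → ℝ) (hest : Measurable est)
    (v : NNReal) (hv : 0 < v) (η : ℝ) (hη : 0 < η) :
    ∃ m : ℝ,
      (Measure.pi fun _ : Fin n => gaussianReal m v) {y | m + η ≤ est y} ≥
        (Measure.pi fun _ : Fin n => gaussianReal m v) {y | m + η ≤ (1 / n) * ∑ i, y i} ∨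
      (Measure.pi fun _ : Fin n => gaussianReal m v) {y | est y ≤ m - η} ≥
        (Measure.pi fun _ : Fin n => gaussianReal m v) {y | (1 / n) * ∑ i, y i ≤ m - η} := by
  by_contra! hcon
  obtain ⟨hlow, -⟩ := hcon (-η)
  obtain ⟨-, hhigh⟩ := hcon η
  simp only [neg_add_cancel, sub_self] at hlow hhigh
  have hNP := pi_gaussianReal_mean_test_le hn hv.ne' (neg_le_self hη.le)
    (measurableSet_le measurable_const hest : MeasurableSet {y | 0 ≤ est y})
  simp only [neg_add_cancel, zero_div] at hNP
  have hcompl : {y | 0 ≤ est y}ᶜ ⊆ {y | est y ≤ 0} :=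
    fun y (hy : ¬ 0 ≤ est y) => (not_le.1 hy).le
  exact (ENNReal.add_lt_add hlow hhigh).not_ge
    (hNP.trans (add_le_add_right (measure_mono hcompl) _))
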